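/- arXiv:math/0306008 — 2 statements merged into one kernel-verified Lean document; each statement's English description precedes it below -/
import Mathlib

section
/- Euler's constant satisfies the key formula γ = ∫_1^∞ Σ_{n=1}^∞ n!/((n+1)·t(t+1)···(t+n)) dt. -/
/-!
For `t > 0` the Beta integral gives `n! / (t(t+1)⋯(t+n)) = ∫₀¹ x^(t-1) (1-x)^n dx`, and summing
`(1-x)^n / (n+1)` over `n ≥ 0` turns the full series into `∫₀¹ x^(t-1) (-log x) / (1-x) dx`.
Expanding `1 / (1-x)` geometrically instead evaluates this integral as `∑ₘ 1 / (t+m)²`.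
Removing the term `n = 0`, which is `1/t = ∑ₘ (1/(t+m) - 1/(t+m+1))`, leaves the positive series
`∑ₘ 1 / ((t+m)² (t+m+1))`. Its `m`-th term integrates over `(1, ∞)` to
`1/(m+1) - log((m+2)/(m+1))`, the `m`-th increment of `H_m - log(m+1)`, so the integral is `γ`.
All interchanges of sums and integrals are justified by positivity of the terms.
-/

open MeasureTheory Real Set Filter Topology
open scoped Nat

lemma hasSum_setIntegral_of_nonneg {α ι : Type*} [MeasurableSpace α] [Countable ι]
    {μ : Measure α} {s : Set α} {F : ι → α → ℝ} {f : α → ℝ} (hs : MeasurableSet s)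
    (hF : ∀ i, IntegrableOn (F i) s μ) (hF_nonneg : ∀ i, ∀ x ∈ s, 0 ≤ F i x)
    (h_sum : Summable fun i ↦ ∫ x in s, F i x ∂μ) (h_lim : ∀ x ∈ s, HasSum (F · x) (f x)) :
    HasSum (fun i ↦ ∫ x in s, F i x ∂μ) (∫ x in s, f x ∂μ) := by
  have h_norm (i : ι) : ∫ x in s, ‖F i x‖ ∂μ = ∫ x in s, F i x ∂μ :=
    setIntegral_congr_fun hs fun x hx ↦ Real.norm_of_nonneg (hF_nonneg i x hx)
  rw [setIntegral_congr_fun hs fun x hx ↦ (h_lim x hx).tsum_eq.symm]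
  exact hasSum_integral_of_summable_integral_norm hF (by simpa only [h_norm] using h_sum)

lemma hasSum_succ_sub_of_monotone {f : ℕ → ℝ} {l : ℝ} (hf : Monotone f)
    (hl : Tendsto f atTop (𝓝 l)) : HasSum (fun n ↦ f (n + 1) - f n) (l - f 0) := by
  rw [hasSum_iff_tendsto_nat_of_nonneg fun n ↦ sub_nonneg.2 (hf n.le_succ)]
  simpa only [Finset.sum_range_sub] using hl.sub_const (f 0)

lemma summable_one_div_add_sq {t : ℝ} (ht : 0 < t) :
    Summable fun m : ℕ ↦ 1 / (t + m) ^ 2 := by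
  refine ((summable_one_div_nat_add_rpow t 2).2 one_lt_two).congr fun m ↦ ?_
  rw [abs_of_pos (by positivity), rpow_two, add_comm]

lemma hasSum_one_div_sub_one_div_add_one {t : ℝ} (ht : 0 < t) :
    HasSum (fun m : ℕ ↦ 1 / (t + m) - 1 / (t + m + 1)) (1 / t) := by
  have h_mono : Monotone fun m : ℕ ↦ -(1 / (t + m)) := fun a b hab ↦ by
    dsimp only
    gcongr
  have h_lim : Tendsto (fun m : ℕ ↦ -(1 / (t + m))) atTop (𝓝 0) := by
    simpa using ((tendsto_const_nhds (x := (1 : ℝ))).div_atTop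
      (tendsto_atTop_add_const_left _ t tendsto_natCast_atTop_atTop)).neg
  have h := hasSum_succ_sub_of_monotone h_mono h_lim
  rw [zero_sub, Nat.cast_zero, add_zero, neg_neg] at h
  refine h.congr_fun fun m ↦ ?_
  push_cast
  ring

lemma integral_rpow_mul_one_sub_pow {t : ℝ} (ht : 0 < t) (n : ℕ) :
    ∫ x in (0 : ℝ)..1, x ^ (t - 1) * (1 - x) ^ n = n ! / ∏ k ∈ Finset.range (n + 1), (t + k) := by
  have h := Complex.betaIntegral_eval_nat_add_one_right (u := t) (by simpa using ht) n
  rw [Complex.betaIntegral, add_sub_cancel_right] at h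
  have h_real : ∫ x in (0 : ℝ)..1, (x : ℂ) ^ ((t : ℂ) - 1) * (1 - (x : ℂ)) ^ (n : ℂ) =
      ((∫ x in (0 : ℝ)..1, x ^ (t - 1) * (1 - x) ^ n : ℝ) : ℂ) := by
    rw [← intervalIntegral.integral_ofReal]
    refine intervalIntegral.integral_congr fun x hx ↦ ?_
    rw [uIcc_of_le zero_le_one] at hx
    simp [Complex.ofReal_cpow hx.1]
  exact_mod_cast h_real ▸ h

lemma continuousOn_rpow_mul_log {s : ℝ} (hs : 0 < s) :
    ContinuousOn (fun x : ℝ ↦ x ^ s * log x) (Ici 0) := by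
  intro x hx
  rcases (mem_Ici.mp hx).eq_or_lt with rfl | hx
  · rw [← continuousWithinAt_Ioi_iff_Ici, ContinuousWithinAt]
    simpa [zero_rpow hs.ne', mul_comm] using tendsto_log_mul_rpow_nhdsGT_zero hs
  · exact ((continuousAt_rpow_const x s (Or.inl hx.ne')).mul
      (continuousAt_log hx.ne')).continuousWithinAt

lemma continuousOn_rpow_div_sq_sub_rpow_mul_log_div {s : ℝ} (hs : 0 < s) :
    ContinuousOn (fun y : ℝ ↦ y ^ s / s ^ 2 - y ^ s * log y / s) (Ici 0) :=
  ((continuousOn_id.rpow_const fun _ _ ↦ Or.inr hs.le).div_const _).sub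
    ((continuousOn_rpow_mul_log hs).div_const _)

lemma hasDerivAt_rpow_div_sq_sub_rpow_mul_log_div {s x : ℝ} (hs : s ≠ 0) (hx : 0 < x) :
    HasDerivAt (fun y ↦ y ^ s / s ^ 2 - y ^ s * log y / s) (x ^ (s - 1) * -log x) x := by
  have h := hasDerivAt_rpow_const (x := x) (p := s) (Or.inl hx.ne')
  refine ((h.div_const (s ^ 2)).sub ((h.mul (hasDerivAt_log hx.ne')).div_const s)).congr_deriv ?_
  rw [rpow_sub_one hx.ne']
  field_simp
  ring

lemma integrableOn_rpow_mul_neg_log {s : ℝ} (hs : 0 < s) :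
    IntegrableOn (fun x : ℝ ↦ x ^ (s - 1) * -log x) (Ioc 0 1) := by
  refine intervalIntegral.integrableOn_deriv_of_nonneg
    ((continuousOn_rpow_div_sq_sub_rpow_mul_log_div hs).mono Icc_subset_Ici_self)
    (fun x hx ↦ hasDerivAt_rpow_div_sq_sub_rpow_mul_log_div hs.ne' hx.1) fun x hx ↦ ?_
  exact mul_nonneg (rpow_nonneg hx.1.le _) (neg_nonneg.2 (log_nonpos hx.1.le hx.2.le))

lemma integral_rpow_mul_neg_log {s : ℝ} (hs : 0 < s) :
    ∫ x in (0 : ℝ)..1, x ^ (s - 1) * -log x = 1 / s ^ 2 := by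
  rw [intervalIntegral.integral_eq_sub_of_hasDerivAt_of_le zero_le_one
    ((continuousOn_rpow_div_sq_sub_rpow_mul_log_div hs).mono Icc_subset_Ici_self)
    (fun x hx ↦ hasDerivAt_rpow_div_sq_sub_rpow_mul_log_div hs.ne' hx.1)
    ((intervalIntegrable_iff_integrableOn_Ioc_of_le zero_le_one).2
      (integrableOn_rpow_mul_neg_log hs))]
  simp [zero_rpow hs.ne']

lemma hasSum_one_div_add_sq {t : ℝ} (ht : 0 < t) :
    HasSum (fun m : ℕ ↦ 1 / (t + m) ^ 2) (∫ x in Ioo 0 1, x ^ (t - 1) * -log x / (1 - x)) := by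
  have h_pos (m : ℕ) : 0 < t + m := by positivity
  have h_eq (m : ℕ) : EqOn (fun x ↦ x ^ (t + m - 1) * -log x)
      (fun x ↦ x ^ (t - 1) * -log x * x ^ m) (Ioo 0 1) := fun x hx ↦ by
    dsimp only
    rw [add_sub_right_comm, rpow_add hx.1, rpow_natCast]
    ring
  have h_int (m : ℕ) : ∫ x in Ioo 0 1, x ^ (t - 1) * -log x * x ^ m = 1 / (t + m) ^ 2 := by
    rw [← setIntegral_congr_fun measurableSet_Ioo (h_eq m), integral_Ioc_eq_integral_Ioo.symm,
      ← intervalIntegral.integral_of_le zero_le_one, integral_rpow_mul_neg_log (h_pos m)]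
  have h := hasSum_setIntegral_of_nonneg (f := fun x ↦ x ^ (t - 1) * -log x / (1 - x))
    measurableSet_Ioo (fun m ↦ ((integrableOn_rpow_mul_neg_log (h_pos m)).mono_set
      Ioo_subset_Ioc_self).congr_fun (h_eq m) measurableSet_Ioo)
    (fun m x hx ↦ mul_nonneg (mul_nonneg (rpow_nonneg hx.1.le _)
      (neg_nonneg.2 (log_nonpos hx.1.le hx.2.le))) (pow_nonneg hx.1.le m))
    (by simpa only [h_int] using summable_one_div_add_sq ht)
    (fun x hx ↦ by simpa only [div_eq_mul_inv] using
      (hasSum_geometric_of_lt_one hx.1.le hx.2).mul_left (x ^ (t - 1) * -log x))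
  simpa only [h_int] using h

lemma factorial_div_mul_prod_le {t : ℝ} (ht : 1 ≤ t) (n : ℕ) :
    (n ! : ℝ) / ((n + 1) * ∏ k ∈ Finset.range (n + 1), (t + k)) ≤ 1 / (1 + n) ^ 2 := by
  have h_prod : ((n + 1)! : ℝ) ≤ ∏ k ∈ Finset.range (n + 1), (t + k) := by
    rw [← Finset.prod_range_add_one_eq_factorial, Nat.cast_prod]
    exact Finset.prod_le_prod (fun k _ ↦ by positivity) fun k _ ↦ by push_cast; linarith
  calc (n ! : ℝ) / ((n + 1) * ∏ k ∈ Finset.range (n + 1), (t + k))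
      ≤ n ! / ((n + 1) * (n + 1)!) := by gcongr
    _ = 1 / (1 + n) ^ 2 := by
      rw [Nat.factorial_succ]
      push_cast
      field_simp
      ring

lemma hasSum_factorial_div_mul_prod {t : ℝ} (ht : 1 ≤ t) :
    HasSum (fun n : ℕ ↦ (n ! : ℝ) / ((n + 1) * ∏ k ∈ Finset.range (n + 1), (t + k)))
      (∫ x in Ioo 0 1, x ^ (t - 1) * -log x / (1 - x)) := by
  have ht0 : 0 < t := by linarith
  have h_int (n : ℕ) : ∫ x in Ioo (0 : ℝ) 1, x ^ (t - 1) * (1 - x) ^ n / (n + 1) =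
      n ! / ((n + 1) * ∏ k ∈ Finset.range (n + 1), (t + k)) := by
    rw [integral_div, integral_Ioc_eq_integral_Ioo.symm,
      ← intervalIntegral.integral_of_le zero_le_one, integral_rpow_mul_one_sub_pow ht0, div_div,
      mul_comm]
  have h_nonneg (n : ℕ) : 0 ≤ (n ! : ℝ) / ((n + 1) * ∏ k ∈ Finset.range (n + 1), (t + k)) := by
    have : 0 < ∏ k ∈ Finset.range (n + 1), (t + k) := Finset.prod_pos fun k _ ↦ by positivity
    positivity
  have h := hasSum_setIntegral_of_nonneg (F := fun (n : ℕ) x ↦ x ^ (t - 1) * (1 - x) ^ n / (n + 1))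
    (f := fun x ↦ x ^ (t - 1) * -log x / (1 - x)) measurableSet_Ioo
    (fun n ↦ (intervalIntegrable_iff_integrableOn_Ioo_of_le zero_le_one).1
      (((intervalIntegral.intervalIntegrable_rpow' (by linarith)).mul_continuousOn
        (by fun_prop)).div_const _))
    (fun n x hx ↦ div_nonneg
      (mul_nonneg (rpow_nonneg hx.1.le _) (pow_nonneg (by linarith [hx.2]) n)) (by positivity))
    (by simpa only [h_int] using
      (summable_one_div_add_sq one_pos).of_nonneg_of_le h_nonneg (factorial_div_mul_prod_le ht))
    fun x hx ↦ by
      have h_log := hasSum_pow_div_log_of_abs_lt_one (x := 1 - x)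
        (by rw [abs_of_pos (by linarith [hx.2])]; linarith [hx.1])
      have h_terms : (fun n : ℕ ↦ x ^ (t - 1) * ((1 - x) ^ (n + 1) / (n + 1) / (1 - x))) =
          fun n : ℕ ↦ x ^ (t - 1) * (1 - x) ^ n / (n + 1) := by
        have : 1 - x ≠ 0 := by linarith [hx.2]
        funext n
        field_simp
        ring
      have h := (h_log.div_const (1 - x)).mul_left (x ^ (t - 1))
      rwa [h_terms, sub_sub_cancel, ← mul_div_assoc] at h
  simpa only [h_int] using h

lemma hasSum_one_div_sq_mul_add_one {t : ℝ} (ht : 1 ≤ t) :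
    HasSum (fun m : ℕ ↦ 1 / ((m + t) ^ 2 * (m + t + 1)))
      (∑' n : ℕ+, ((n : ℕ)! : ℝ) / ((n + 1) * ∏ k ∈ Finset.range (n + 1), (t + k))) := by
  have ht0 : 0 < t := by linarith
  set S := ∫ x in Ioo 0 1, x ^ (t - 1) * -log x / (1 - x)
  set T : ℕ → ℝ := fun n ↦ (n ! : ℝ) / ((n + 1) * ∏ k ∈ Finset.range (n + 1), (t + k))
  have hT : HasSum T (S - 1 / t + T 0) := by
    rw [show T 0 = 1 / t by simp [T], sub_add_cancel]
    exact hasSum_factorial_div_mul_prod ht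
  rw [(hasSum_pnat_iff.2 hT).tsum_eq]
  refine ((hasSum_one_div_add_sq ht0).sub (hasSum_one_div_sub_one_div_add_one ht0)).congr_fun
    fun m ↦ ?_
  have : (0 : ℝ) < m + t := by positivity
  field_simp
  ring

lemma hasDerivAt_log_sub_log_sub_one_div {c t : ℝ} (h : 0 < c + t) :
    HasDerivAt (fun s ↦ log (c + s + 1) - log (c + s) - 1 / (c + s))
      (1 / ((c + t) ^ 2 * (c + t + 1))) t := by
  have h_lin : HasDerivAt (fun s ↦ c + s) 1 t := (hasDerivAt_id t).const_add c
  have h_log := (h_lin.add_const 1).log (by positivity)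
  refine ((h_log.sub (h_lin.log h.ne')).sub ((hasDerivAt_const t (1 : ℝ)).div h_lin h.ne'))
    |>.congr_deriv ?_
  field_simp
  ring

lemma tendsto_log_sub_log_sub_one_div (c : ℝ) :
    Tendsto (fun s ↦ log (c + s + 1) - log (c + s) - 1 / (c + s)) atTop (𝓝 0) := by
  have h := tendsto_atTop_add_const_left atTop c tendsto_id
  simpa using (((tendsto_log_comp_add_sub_log 1).comp h).sub
    ((tendsto_const_nhds (x := (1 : ℝ))).div_atTop h))

lemma integrableOn_Ioi_one_div_sq_mul_add_one {a c : ℝ} (h : 0 < c + a) :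
    IntegrableOn (fun t ↦ 1 / ((c + t) ^ 2 * (c + t + 1))) (Ioi a) :=
  integrableOn_Ioi_deriv_of_nonneg'
    (fun t ht ↦ hasDerivAt_log_sub_log_sub_one_div (by linarith [mem_Ici.mp ht]))
    (fun t ht ↦ by
      have : 0 < c + t := by linarith [mem_Ioi.mp ht]
      positivity)
    (tendsto_log_sub_log_sub_one_div c)

lemma integral_Ioi_one_div_sq_mul_add_one {a c : ℝ} (h : 0 < c + a) :
    ∫ t in Ioi a, 1 / ((c + t) ^ 2 * (c + t + 1)) =
      1 / (c + a) - (log (c + a + 1) - log (c + a)) := by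
  rw [integral_Ioi_of_hasDerivAt_of_nonneg'
    (fun t ht ↦ hasDerivAt_log_sub_log_sub_one_div (by linarith [mem_Ici.mp ht]))
    (fun t ht ↦ by
      have : 0 < c + t := by linarith [mem_Ioi.mp ht]
      positivity)
    (tendsto_log_sub_log_sub_one_div c)]
  ring

lemma eulerMascheroniSeq_succ_sub (m : ℕ) :
    eulerMascheroniSeq (m + 1) - eulerMascheroniSeq m =
      1 / (m + 1) - (log (m + 1 + 1) - log (m + 1)) := by
  simp only [eulerMascheroniSeq, harmonic_succ]
  push_cast
  ring

lemma hasSum_eulerMascheroniConstant :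
    HasSum (fun m : ℕ ↦ 1 / (m + 1) - (log (m + 1 + 1) - log (m + 1)))
      eulerMascheroniConstant := by
  have h := hasSum_succ_sub_of_monotone strictMono_eulerMascheroniSeq.monotone
    tendsto_eulerMascheroniSeq
  rw [eulerMascheroniSeq_zero, sub_zero] at h
  exact h.congr_fun fun m ↦ (eulerMascheroniSeq_succ_sub m).symm

theorem stmt4 :
    Real.eulerMascheroniConstant =
      ∫ t in Set.Ioi (1 : ℝ),
        ∑' n : ℕ+, ((n : ℕ).factorial : ℝ) /
          (((n : ℝ) + 1) * ∏ k ∈ Finset.range ((n : ℕ) + 1), (t + k)) := by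
  have h_pos (m : ℕ) : 0 < (m : ℝ) + 1 := by positivity
  have h := hasSum_setIntegral_of_nonneg measurableSet_Ioi
    (fun m : ℕ ↦ integrableOn_Ioi_one_div_sq_mul_add_one (h_pos m))
    (fun m t ht ↦ by
      have : 0 < (m : ℝ) + t := by linarith [mem_Ioi.mp ht]
      positivity)
    (by simpa only [integral_Ioi_one_div_sq_mul_add_one (h_pos _)] using
      hasSum_eulerMascheroniConstant.summable)
    fun t ht ↦ hasSum_one_div_sq_mul_add_one (mem_Ioi.mp ht).le
  simp only [integral_Ioi_one_div_sq_mul_add_one (h_pos _)] at h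
  exact hasSum_eulerMascheroniConstant.unique h
end

section
/- Euler's constant equals the double integral γ = ∫_0^1 ∫_0^{1−u} −v/((1−v)(1−u) ln u) dv du. -/
/-!
For `0 < u < 1` the inner integral is elementary and equals `g u = 1 / (1 - u) + 1 / log u`,
which lies in `[0, 1]`. Since `H_n = ∫₀¹ (1 - uⁿ) / (1 - u) du` and
`log (n + 1) = ∫₀¹ (uⁿ - 1) / log u du` (Fubini applied to `∫₀¹ ∫₀ⁿ uᵗ dt du`), we get
`H_n - log (n + 1) = ∫₀¹ (1 - uⁿ) g u du`, and dominated convergence lets `n → ∞`.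
-/

open MeasureTheory Set Real Filter Topology

noncomputable def eulerIntegrand (u : ℝ) : ℝ := (1 - u)⁻¹ + (log u)⁻¹

lemma eulerIntegrand_nonneg {u : ℝ} (h0 : 0 < u) (h1 : u < 1) : 0 ≤ eulerIntegrand u := by
  have hlog : log u ≤ u - 1 := log_le_sub_one_of_pos h0
  have : (-log u)⁻¹ ≤ (1 - u)⁻¹ := inv_anti₀ (by linarith) (by linarith)
  rw [inv_neg] at this
  unfold eulerIntegrand
  linarith

lemma eulerIntegrand_le_one {u : ℝ} (h0 : 0 < u) (h1 : u < 1) : eulerIntegrand u ≤ 1 := by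
  have hlog : log u < 0 := log_neg h0 h1
  have hinv : 1 - u⁻¹ ≤ log u := one_sub_inv_le_log_of_pos h0
  have key : u - 1 ≤ u * log u := by
    have := mul_le_mul_of_nonneg_left hinv h0.le
    rwa [mul_sub, mul_inv_cancel₀ h0.ne', mul_one] at this
  unfold eulerIntegrand
  rw [inv_eq_one_div, inv_eq_one_div, div_add_div _ _ (by linarith) hlog.ne,
    div_le_one_of_neg (mul_neg_of_pos_of_neg (by linarith) hlog)]
  linarith

lemma integral_div_one_sub {a : ℝ} (ha : a < 1) :
    ∫ v in (0 : ℝ)..a, v / (1 - v) = -log (1 - a) - a := by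
  have hpos : ∀ v ∈ uIcc 0 a, 0 < 1 - v := fun v hv =>
    sub_pos.mpr (hv.2.trans_lt (max_lt zero_lt_one ha))
  have hderiv : ∀ v ∈ uIcc 0 a, HasDerivAt (fun v => -log (1 - v) - v) (v / (1 - v)) v := by
    intro v hv
    have : HasDerivAt (fun v => -log (1 - v) - v) (-(-1 / (1 - v)) - 1) v :=
      (((hasDerivAt_id' v).const_sub 1).log (hpos v hv).ne').neg.sub (hasDerivAt_id' v)
    convert this using 1
    field_simp [(hpos v hv).ne']
    ring
  have hcont : ContinuousOn (fun v => v / (1 - v)) (uIcc 0 a) :=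
    continuousOn_id.div (by fun_prop) fun v hv => (hpos v hv).ne'
  rw [intervalIntegral.integral_eq_sub_of_hasDerivAt hderiv hcont.intervalIntegrable]
  simp

lemma integral_neg_div_eq_eulerIntegrand {u : ℝ} (h0 : 0 < u) (h1 : u < 1) :
    ∫ v in Ioo 0 (1 - u), -v / ((1 - v) * (1 - u) * log u) = eulerIntegrand u := by
  have hlog : log u ≠ 0 := (log_neg h0 h1).ne
  have hu : 1 - u ≠ 0 := by linarith
  have hfactor : (fun v => -v / ((1 - v) * (1 - u) * log u))
      = fun v => -((1 - u) * log u)⁻¹ * (v / (1 - v)) := by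
    ext v
    rw [mul_assoc, ← div_div, div_eq_mul_inv, div_eq_mul_inv]
    ring
  rw [hfactor, integral_const_mul, ← integral_Ioc_eq_integral_Ioo,
    ← intervalIntegral.integral_of_le (by linarith), integral_div_one_sub (by linarith),
    sub_sub_cancel, eulerIntegrand]
  field_simp
  ring

lemma one_sub_pow_div_one_sub_eq_geom_sum {u : ℝ} (hu : u ≠ 1) (n : ℕ) :
    (1 - u ^ n) / (1 - u) = ∑ k ∈ Finset.range n, u ^ k := by
  rw [div_eq_iff (sub_ne_zero.mpr hu.symm), geom_sum_mul_neg]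

lemma integrableOn_one_sub_pow_div_one_sub (n : ℕ) :
    IntegrableOn (fun u : ℝ => (1 - u ^ n) / (1 - u)) (Ioo 0 1) :=
  ((continuous_finsetSum _ fun k _ => continuous_pow k).integrableOn_Icc.mono_set
    Ioo_subset_Icc_self).congr_fun
    (fun _ hu => (one_sub_pow_div_one_sub_eq_geom_sum hu.2.ne n).symm) measurableSet_Ioo

lemma integral_one_sub_pow_div_one_sub_eq_harmonic (n : ℕ) :
    ∫ u in Ioo (0 : ℝ) 1, (1 - u ^ n) / (1 - u) = harmonic n := by
  rw [setIntegral_congr_fun measurableSet_Ioo fun _ hu =>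
      one_sub_pow_div_one_sub_eq_geom_sum hu.2.ne n,
    ← integral_Ioc_eq_integral_Ioo, ← intervalIntegral.integral_of_le zero_le_one,
    intervalIntegral.integral_finsetSum fun k _ => intervalIntegral.intervalIntegrable_pow k]
  simp [harmonic]

lemma integral_const_rpow {u : ℝ} (h0 : 0 < u) (h1 : u ≠ 1) (s : ℝ) :
    ∫ t in (0 : ℝ)..s, u ^ t = (u ^ s - 1) / log u := by
  have hlog : log u ≠ 0 := log_ne_zero_of_pos_of_ne_one h0 h1
  have hderiv : ∀ t ∈ uIcc 0 s, HasDerivAt (fun t => u ^ t / log u) (u ^ t) t := fun t _ => by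
    simpa [hlog] using (hasStrictDerivAt_const_rpow h0 t).hasDerivAt.div_const (log u)
  rw [intervalIntegral.integral_eq_sub_of_hasDerivAt hderiv
    ((continuous_const_rpow h0.ne').intervalIntegrable 0 s), rpow_zero, sub_div]

lemma integrable_rpow_prod (s : ℝ) :
    Integrable (fun p : ℝ × ℝ => p.1 ^ p.2)
      ((volume.restrict (Ioo 0 1)).prod (volume.restrict (Ioc 0 s))) := by
  refine Integrable.mono' (integrable_const 1) (by fun_prop) ?_
  rw [Measure.prod_restrict]
  filter_upwards [ae_restrict_mem (measurableSet_Ioo.prod measurableSet_Ioc)] with p ⟨hu, ht⟩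
  rw [norm_of_nonneg (rpow_nonneg hu.1.le _)]
  exact rpow_le_one hu.1.le hu.2.le ht.1.le

section

variable {s : ℝ}

lemma setIntegral_Ioc_const_rpow {u : ℝ} (h0 : 0 < u) (h1 : u ≠ 1) (hs : 0 ≤ s) :
    ∫ t in Ioc 0 s, u ^ t = (u ^ s - 1) / log u := by
  rw [← intervalIntegral.integral_of_le hs, integral_const_rpow h0 h1]

lemma integrableOn_rpow_sub_one_div_log (hs : 0 ≤ s) :
    IntegrableOn (fun u => (u ^ s - 1) / log u) (Ioo 0 1) :=
  IntegrableOn.congr_fun (integrable_rpow_prod s).integral_prod_left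
    (fun _ hu => setIntegral_Ioc_const_rpow hu.1 hu.2.ne hs) measurableSet_Ioo

lemma integral_rpow_sub_one_div_log (hs : 0 ≤ s) :
    ∫ u in Ioo 0 1, (u ^ s - 1) / log u = log (1 + s) := by
  calc ∫ u in Ioo 0 1, (u ^ s - 1) / log u
      = ∫ u in Ioo 0 1, ∫ t in Ioc 0 s, u ^ t :=
        setIntegral_congr_fun measurableSet_Ioo fun _ hu =>
          (setIntegral_Ioc_const_rpow hu.1 hu.2.ne hs).symm
    _ = ∫ t in Ioc 0 s, ∫ u in Ioo 0 1, u ^ t := integral_integral_swap (integrable_rpow_prod s)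
    _ = ∫ t in (0 : ℝ)..s, (t + 1)⁻¹ := by
        rw [intervalIntegral.integral_of_le hs]
        refine setIntegral_congr_fun measurableSet_Ioc fun t ht => ?_
        rw [← integral_Ioc_eq_integral_Ioo, ← intervalIntegral.integral_of_le zero_le_one,
          integral_rpow (Or.inl (by linarith [ht.1]))]
        simp [zero_rpow (by linarith [ht.1] : t + 1 ≠ 0)]
    _ = log (1 + s) := by
        rw [intervalIntegral.integral_comp_add_right (fun x => x⁻¹), zero_add,
          integral_inv_of_pos one_pos (by linarith), div_one, add_comm]

end

lemma one_sub_pow_mul_eulerIntegrand (u : ℝ) (n : ℕ) :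
    (1 - u ^ n) * eulerIntegrand u = (1 - u ^ n) / (1 - u) - (u ^ (n : ℝ) - 1) / log u := by
  rw [rpow_natCast, eulerIntegrand]
  ring

lemma integrableOn_one_sub_pow_mul_eulerIntegrand (n : ℕ) :
    IntegrableOn (fun u => (1 - u ^ n) * eulerIntegrand u) (Ioo 0 1) := by
  simp_rw [one_sub_pow_mul_eulerIntegrand]
  exact (integrableOn_one_sub_pow_div_one_sub n).sub
    (integrableOn_rpow_sub_one_div_log n.cast_nonneg)

lemma integral_one_sub_pow_mul_eulerIntegrand_eq (n : ℕ) :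
    ∫ u in Ioo 0 1, (1 - u ^ n) * eulerIntegrand u = harmonic n - log (n + 1) := by
  simp_rw [one_sub_pow_mul_eulerIntegrand]
  rw [integral_sub (integrableOn_one_sub_pow_div_one_sub n)
    (integrableOn_rpow_sub_one_div_log n.cast_nonneg), integral_one_sub_pow_div_one_sub_eq_harmonic,
    integral_rpow_sub_one_div_log n.cast_nonneg, add_comm]

lemma eulerMascheroniConstant_eq_integral_eulerIntegrand :
    eulerMascheroniConstant = ∫ u in Ioo 0 1, eulerIntegrand u := by
  have hlim : Tendsto (fun n : ℕ => ∫ u in Ioo 0 1, (1 - u ^ n) * eulerIntegrand u) atTop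
      (𝓝 (∫ u in Ioo 0 1, eulerIntegrand u)) := by
    refine tendsto_integral_of_dominated_convergence (fun _ => 1)
      (fun n => (integrableOn_one_sub_pow_mul_eulerIntegrand n).aestronglyMeasurable)
      (integrableOn_const measure_Ioo_lt_top.ne) (fun n => ?_) ?_
    · filter_upwards [ae_restrict_mem measurableSet_Ioo] with u ⟨h0, h1⟩
      have hpow : u ^ n ≤ 1 := pow_le_one₀ h0.le h1.le
      rw [norm_mul, norm_of_nonneg (by linarith), norm_of_nonneg (eulerIntegrand_nonneg h0 h1)]
      exact mul_le_one₀ (by linarith [pow_pos h0 n]) (eulerIntegrand_nonneg h0 h1)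
        (eulerIntegrand_le_one h0 h1)
    · filter_upwards [ae_restrict_mem measurableSet_Ioo] with u ⟨h0, h1⟩
      simpa using ((tendsto_pow_atTop_nhds_zero_of_lt_one h0.le h1).const_sub 1).mul_const
        (eulerIntegrand u)
  simp_rw [integral_one_sub_pow_mul_eulerIntegrand_eq] at hlim
  exact tendsto_nhds_unique tendsto_harmonic_sub_log_add_one hlim

theorem stmt11 :
    Real.eulerMascheroniConstant =
      ∫ u in Set.Ioo (0 : ℝ) 1, ∫ v in Set.Ioo (0 : ℝ) (1 - u),
        -v / ((1 - v) * (1 - u) * Real.log u) := by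
  rw [eulerMascheroniConstant_eq_integral_eulerIntegrand]
  exact setIntegral_congr_fun measurableSet_Ioo fun u ⟨h0, h1⟩ =>
    (integral_neg_div_eq_eulerIntegrand h0 h1).symm
end
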